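/- Let P be an n×n real symmetric positive semidefinite matrix and Φ an n×n real symmetric matrix such that I + P^{1/2} Φ P^{1/2} is invertible. Then I + P Φ is invertible and (I + P Φ)⁻¹ P = P^{1/2} (I + P^{1/2} Φ P^{1/2})⁻¹ P^{1/2}. -/

import Mathlib

open Matrix

/-- The symmetric positive semidefinite square root of a positive semidefinite
real matrix (junk value `0` on non-PSD matrices). -/
noncomputable def psdSqrt {n : ℕ} (M : Matrix (Fin n) (Fin n) ℝ) :
    Matrix (Fin n) (Fin n) ℝ :=
  open scoped Classical in
  if h : M.PosSemidef then
    (h.1.eigenvectorUnitary : Matrix (Fin n) (Fin n) ℝ) *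
      diagonal (fun i => Real.sqrt (h.1.eigenvalues i)) *
      (star h.1.eigenvectorUnitary : Matrix (Fin n) (Fin n) ℝ)
  else 0

private lemma isUnit_one_add_swap {R : Type*} [Ring R] {a b : R}
    (h : IsUnit (1 + a * b)) : IsUnit (1 + b * a) := by
  obtain ⟨u, hu⟩ := h
  have h1 : (↑u : R) * ↑u⁻¹ = 1 := u.mul_inv
  have h2 : (↑u⁻¹ : R) * ↑u = 1 := u.inv_mul
  rw [hu] at h1 h2
  have key1 : (1 + b * a) * (1 - b * ↑u⁻¹ * a) = 1 := by
    have h3 : b * ((1 + a * b) * ↑u⁻¹) * a = b * a := by rw [h1, mul_one]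
    calc (1 + b * a) * (1 - b * ↑u⁻¹ * a)
        = 1 + b * a - b * ((1 + a * b) * ↑u⁻¹) * a := by noncomm_ring
      _ = 1 := by rw [h3]; noncomm_ring
  have key2 : (1 - b * ↑u⁻¹ * a) * (1 + b * a) = 1 := by
    have h3 : b * (↑u⁻¹ * (1 + a * b)) * a = b * a := by rw [h2, mul_one]
    calc (1 - b * ↑u⁻¹ * a) * (1 + b * a)
        = 1 + b * a - b * (↑u⁻¹ * (1 + a * b)) * a := by noncomm_ring
      _ = 1 := by rw [h3]; noncomm_ring
  exact ⟨⟨1 + b * a, 1 - b * ↑u⁻¹ * a, key1, key2⟩, rfl⟩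

/-- push-through identity `(I + PΦ)⁻¹ P = P^{1/2}(I + P^{1/2}ΦP^{1/2})⁻¹P^{1/2}`. -/
theorem push_through_identity {n : ℕ}
    (P Φ : Matrix (Fin n) (Fin n) ℝ) (hP : P.PosSemidef) (hΦ : Φ.IsHermitian)
    (hinv : IsUnit ((1 : Matrix (Fin n) (Fin n) ℝ) + psdSqrt P * Φ * psdSqrt P)) :
    IsUnit ((1 : Matrix (Fin n) (Fin n) ℝ) + P * Φ) ∧
    ((1 : Matrix (Fin n) (Fin n) ℝ) + P * Φ)⁻¹ * P =
      psdSqrt P * ((1 : Matrix (Fin n) (Fin n) ℝ) + psdSqrt P * Φ * psdSqrt P)⁻¹ * psdSqrt P := by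
  set S := psdSqrt P with hS
  have hSS : S * S = P := by
    rw [hS, psdSqrt, dif_pos hP]
    classical
    have hU : (star hP.1.eigenvectorUnitary : Matrix (Fin n) (Fin n) ℝ) * (hP.1.eigenvectorUnitary : Matrix (Fin n) (Fin n) ℝ) = 1 := Unitary.coe_star_mul_self _
    conv_rhs => rw [hP.1.spectral_theorem, Unitary.conjStarAlgAut_apply]
    have hD : diagonal (fun i => Real.sqrt (hP.1.eigenvalues i)) * diagonal (fun i => Real.sqrt (hP.1.eigenvalues i)) = diagonal (RCLike.ofReal ∘ hP.1.eigenvalues) := by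
      rw [diagonal_mul_diagonal]; congr 1; funext i
      simp [Real.mul_self_sqrt (hP.eigenvalues_nonneg i)]
    calc _ = (hP.1.eigenvectorUnitary : Matrix (Fin n) (Fin n) ℝ) * (diagonal (fun i => Real.sqrt (hP.1.eigenvalues i)) * ((star hP.1.eigenvectorUnitary : Matrix (Fin n) (Fin n) ℝ) * (hP.1.eigenvectorUnitary : Matrix (Fin n) (Fin n) ℝ)) * diagonal (fun i => Real.sqrt (hP.1.eigenvalues i))) * (star hP.1.eigenvectorUnitary : Matrix (Fin n) (Fin n) ℝ) := by simp only [mul_assoc]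
      _ = _ := by rw [hU, mul_one, hD]
  have hswap : IsUnit ((1 : Matrix (Fin n) (Fin n) ℝ) + P * Φ) := by
    have h := isUnit_one_add_swap (a := S * Φ) (b := S) hinv
    rwa [← mul_assoc, hSS] at h
  refine ⟨hswap, ?_⟩
  set A := (1 : Matrix (Fin n) (Fin n) ℝ) + P * Φ
  set B := (1 : Matrix (Fin n) (Fin n) ℝ) + S * Φ * S
  have hA : IsUnit A.det := (isUnit_iff_isUnit_det A).mp hswap
  have hB : IsUnit B.det := (isUnit_iff_isUnit_det B).mp hinv
  have key : A * S = S * B := by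
    simp only [A, B, add_mul, mul_add, one_mul, mul_one, ← hSS]
    noncomm_ring
  have h2 : A⁻¹ * S = S * B⁻¹ := by
    have hSB : S * B * B⁻¹ = S := by
      rw [mul_assoc, Matrix.mul_nonsing_inv _ hB, mul_one]
    calc A⁻¹ * S = A⁻¹ * (S * B * B⁻¹) := by rw [hSB]
      _ = A⁻¹ * (A * S) * B⁻¹ := by rw [key]; noncomm_ring
      _ = S * B⁻¹ := by rw [← mul_assoc, Matrix.nonsing_inv_mul _ hA, one_mul]
  calc A⁻¹ * P = A⁻¹ * S * S := by rw [mul_assoc, hSS]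
    _ = S * B⁻¹ * S := by rw [h2]
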